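/- Let S ⊆ ℝⁿ×ℝᵖ be permutation-invariant with respect to x (i.e., (x,z) ∈ S implies (Px,z) ∈ S for all permutation matrices P). Then conv(S) = {(x,z) : ∃ u, (u,z) ∈ conv(S₀) and u majorizes x}, where S₀ = S ∩ {(u,z) : u₁ ≥ ... ≥ uₙ}. -/
import Mathlib


open Finset

/-- The `i`-th largest entry (0-indexed) of the tuple `x`. -/
noncomputable def sortedDesc (n : ℕ) (x : Fin n → ℝ) : Fin n → ℝ :=
  fun i => x (Tuple.sort x i.rev)

/-- Sum of the `k` largest entries of `x`. -/
noncomputable def topSum (n : ℕ) (x : Fin n → ℝ) (k : ℕ) : ℝ :=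
  ∑ i ∈ Finset.univ.filter (fun i : Fin n => (i : ℕ) < k), sortedDesc n x i

/-- `u` majorizes `x`. -/
def Majorizes (n : ℕ) (u x : Fin n → ℝ) : Prop :=
  (∀ k, k < n → topSum n x k ≤ topSum n u k) ∧ (∑ i, x i = ∑ i, u i)

/-- `u` weakly submajorizes `x`. -/
def WeakSubmajorizes (n : ℕ) (u x : Fin n → ℝ) : Prop :=
  ∀ k, k ≤ n → topSum n x k ≤ topSum n u k

/-- Number of nonzero components. -/
noncomputable def suppCard (n : ℕ) (x : Fin n → ℝ) : ℕ :=
  (Finset.univ.filter (fun i => x i ≠ 0)).card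

/-- prefix sum -/
noncomputable def Pp (n : ℕ) (v : Fin n → ℝ) (k : ℕ) : ℝ :=
  ∑ i ∈ Finset.univ.filter (fun i : Fin n => (i : ℕ) < k), v i

lemma topSum_eq_Pp (n : ℕ) (x : Fin n → ℝ) (k : ℕ) :
    topSum n x k = Pp n (sortedDesc n x) k := rfl

lemma sortedDesc_eq_comp (n : ℕ) (x : Fin n → ℝ) :
    sortedDesc n x = x ∘ (Fin.revPerm.trans (Tuple.sort x)) := by
  funext i; simp [sortedDesc]

lemma sortedDesc_antitone (n : ℕ) (x : Fin n → ℝ) : Antitone (sortedDesc n x) := by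
  intro a b hab
  have h := Tuple.monotone_sort x
  have : (x ∘ Tuple.sort x) b.rev ≤ (x ∘ Tuple.sort x) a.rev := h (Fin.rev_le_rev.2 hab)
  simpa [sortedDesc] using this

lemma sortedDesc_of_antitone {n : ℕ} {v : Fin n → ℝ} (hv : Antitone v) :
    sortedDesc n v = v := by
  have hmono : Monotone (v ∘ (Fin.revPerm : Equiv.Perm (Fin n))) := by
    intro a b hab
    exact hv (by simpa using Fin.rev_le_rev.2 hab)
  have h := (Tuple.comp_sort_eq_comp_iff_monotone (σ := (Fin.revPerm : Equiv.Perm (Fin n)))).2 hmono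
  funext i
  have := congrFun h.symm i.rev
  simpa [sortedDesc] using this

lemma sortedDesc_comp_perm (n : ℕ) (x : Fin n → ℝ) (σ : Equiv.Perm (Fin n)) :
    sortedDesc n (x ∘ σ) = sortedDesc n x := by
  funext i
  have h := Tuple.comp_perm_comp_sort_eq_comp_sort (f := x) (σ := σ)
  have := congrFun h i.rev
  simpa [sortedDesc] using this

lemma Pp_zero (n : ℕ) (v : Fin n → ℝ) : Pp n v 0 = 0 := by simp [Pp]

lemma Pp_succ (n : ℕ) (v : Fin n → ℝ) (k : ℕ) (hk : k < n) :
    Pp n v (k + 1) = Pp n v k + v ⟨k, hk⟩ := by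
  have : Finset.univ.filter (fun i : Fin n => (i : ℕ) < k + 1)
      = insert ⟨k, hk⟩ (Finset.univ.filter (fun i : Fin n => (i : ℕ) < k)) := by
    ext i
    simp only [mem_filter, mem_univ, true_and, mem_insert]
    constructor
    · intro h
      rcases Nat.lt_succ_iff_lt_or_eq.1 h with h | h
      · exact Or.inr h
      · exact Or.inl (Fin.ext h)
    · rintro (rfl | h)
      · exact Nat.lt_succ_self k
      · exact Nat.lt_succ_of_lt h
  rw [Pp, this, Finset.sum_insert (by simp), Pp]
  ring

lemma Pp_n (n : ℕ) (v : Fin n → ℝ) : Pp n v n = ∑ i, v i := by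
  unfold Pp
  rw [Finset.filter_true_of_mem (fun i _ => i.isLt)]

lemma sum_sortedDesc (n : ℕ) (x : Fin n → ℝ) : ∑ i, sortedDesc n x i = ∑ i, x i := by
  rw [sortedDesc_eq_comp]
  exact Equiv.sum_comp _ x

section
variable {n : ℕ}

lemma strictMono_nat_le {k : ℕ} (g : Fin k → ℕ) (hg : StrictMono g) :
    ∀ i : Fin k, (i : ℕ) ≤ g i := by
  have key : ∀ m : ℕ, ∀ h : m < k, m ≤ g ⟨m, h⟩ := by
    intro m
    induction m with
    | zero => intro h; exact Nat.zero_le _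
    | succ m ih =>
        intro h
        have hmk : m < k := by omega
        have h1 : g ⟨m, hmk⟩ < g ⟨m + 1, h⟩ := hg (by simp [Fin.lt_def])
        have h2 := ih hmk
        omega
  intro i
  simpa using key i i.isLt

lemma filter_lt_eq_map {k : ℕ} (hk : k ≤ n) :
    Finset.univ.filter (fun i : Fin n => (i : ℕ) < k)
      = Finset.univ.map (Fin.castLEEmb hk) := by
  ext i
  simp only [mem_filter, mem_univ, true_and, mem_map, Fin.castLEEmb_apply]
  constructor
  · intro h; exact ⟨⟨i, h⟩, Fin.ext rfl⟩
  · rintro ⟨j, rfl⟩; exact j.isLt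

lemma card_filter_lt {k : ℕ} (hk : k ≤ n) :
    (Finset.univ.filter (fun i : Fin n => (i : ℕ) < k)).card = k := by
  rw [filter_lt_eq_map hk, card_map, card_univ, Fintype.card_fin]

lemma antitone_subset_sum_le {n : ℕ} {w : Fin n → ℝ} (hw : Antitone w) (B : Finset (Fin n)) :
    ∑ b ∈ B, w b ≤ Pp n w B.card := by
  set k := B.card with hk
  have hkn : k ≤ n := by
    simpa using Finset.card_le_card (Finset.subset_univ B)
  have e := B.orderIsoOfFin hk.symm
  have hsum : ∑ b ∈ B, w b = ∑ i : Fin k, w (e i) := by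
    rw [← Finset.sum_coe_sort B w]
    exact (Fintype.sum_equiv e.toEquiv (fun i => w (e i)) (fun b => w b.1) (fun i => rfl)).symm
  have hmono : StrictMono (fun i : Fin k => ((e i : Fin n) : ℕ)) := by
    intro a b hab
    exact Fin.lt_def.1 (e.strictMono hab)
  have hle : ∀ i : Fin k, (i : ℕ) ≤ ((e i : Fin n) : ℕ) := strictMono_nat_le _ hmono
  have hPp : Pp n w k = ∑ i : Fin k, w (Fin.castLE hkn i) := by
    rw [Pp, filter_lt_eq_map hkn, Finset.sum_map]
    rfl
  rw [hsum, hPp]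
  apply Finset.sum_le_sum
  intro i _
  apply hw
  exact Fin.le_def.2 (by simpa using hle i)

lemma subset_sum_le_topSum {n : ℕ} (v : Fin n → ℝ) (B : Finset (Fin n)) :
    ∑ b ∈ B, v b ≤ topSum n v B.card := by
  set σ := Fin.revPerm.trans (Tuple.sort v) with hσ
  have hsd : sortedDesc n v = v ∘ σ := sortedDesc_eq_comp n v
  have himg : ∑ c ∈ B.image σ.symm, (sortedDesc n v) c = ∑ b ∈ B, v b := by
    rw [Finset.sum_image (fun a _ b _ h => σ.symm.injective h)]
    apply Finset.sum_congr rfl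
    intro b _
    rw [hsd]
    simp
  have hcard : (B.image σ.symm).card = B.card :=
    Finset.card_image_of_injective B σ.symm.injective
  rw [topSum_eq_Pp, ← himg, ← hcard]
  exact antitone_subset_sum_le (sortedDesc_antitone n v) _

lemma topSum_eq_subset_sum {n : ℕ} (v : Fin n → ℝ) {k : ℕ} (hk : k ≤ n) :
    ∃ A : Finset (Fin n), A.card = k ∧ topSum n v k = ∑ b ∈ A, v b := by
  set σ := Fin.revPerm.trans (Tuple.sort v) with hσ
  refine ⟨(Finset.univ.filter (fun i : Fin n => (i : ℕ) < k)).image σ, ?_, ?_⟩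
  · rw [Finset.card_image_of_injective _ σ.injective, card_filter_lt hk]
  · rw [Finset.sum_image (fun a _ b _ h => σ.injective h), topSum_eq_Pp, Pp]
    apply Finset.sum_congr rfl
    intro i _
    rw [sortedDesc_eq_comp]
    rfl
lemma hlp_aux (n : ℕ) : ∀ d : ℕ, ∀ u x : Fin n → ℝ, Antitone u → Antitone x →
    (∀ k, k ≤ n → Pp n x k ≤ Pp n u k) → (∑ i, x i = ∑ i, u i) →
    (Finset.univ.filter (fun i => u i ≠ x i)).card ≤ d →
    x ∈ convexHull ℝ {w : Fin n → ℝ | ∃ σ : Equiv.Perm (Fin n), w = u ∘ σ} := by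
  intro d
  induction d with
  | zero =>
      intro u x _ _ _ _ hcard
      have hempty : (Finset.univ.filter (fun i => u i ≠ x i)) = ∅ :=
        Finset.card_eq_zero.1 (Nat.le_zero.1 hcard)
      have hux : x = u := by
        funext i
        by_contra h
        have : i ∈ Finset.univ.filter (fun i => u i ≠ x i) := by
          simp [Ne, eq_comm]
          exact fun hh => h hh.symm
        simp [hempty] at this
      exact subset_convexHull ℝ _ ⟨Equiv.refl _, by simpa using hux⟩
  | succ d ih =>
      intro u x hu hx hmaj hsum hcard
      by_cases hcase : ∀ i, u i = x i
      · have hux : x = u := funext fun i => (hcase i).symm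
        exact subset_convexHull ℝ _ ⟨Equiv.refl _, by simpa using hux⟩
      push_neg at hcase
      obtain ⟨i₀, hi₀⟩ := hcase
      -- k : least index where x exceeds u
      have hK : (Finset.univ.filter (fun i => u i < x i)).Nonempty := by
        by_contra h
        rw [Finset.not_nonempty_iff_eq_empty] at h
        have hle : ∀ i : Fin n, x i ≤ u i := by
          intro i
          by_contra hlt
          have : i ∈ Finset.univ.filter (fun i => u i < x i) := by
            simp; exact not_le.1 hlt
          simp [h] at this
        have hlt0 : x i₀ < u i₀ := lt_of_le_of_ne (hle i₀) (fun hh => hi₀ hh.symm)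
        have : ∑ i, x i < ∑ i, u i :=
          Finset.sum_lt_sum (fun i _ => hle i) ⟨i₀, Finset.mem_univ _, hlt0⟩
        linarith [hsum]
      set k := (Finset.univ.filter (fun i => u i < x i)).min' hK with hkdef
      have hk_mem : u k < x k := by
        have h := Finset.min'_mem _ hK
        rw [Finset.mem_filter] at h
        exact h.2
      have hk_min : ∀ i, u i < x i → k ≤ i := by
        intro i hi
        exact Finset.min'_le _ i (by simp [hi])
      -- j : greatest index below k where u exceeds x
      have hJ : (Finset.univ.filter (fun i => i < k ∧ x i < u i)).Nonempty := by
        by_contra h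
        rw [Finset.not_nonempty_iff_eq_empty] at h
        have heq : ∀ i : Fin n, i < k → u i = x i := by
          intro i hik
          have h1 : ¬ x i < u i := by
            intro hh
            have : i ∈ Finset.univ.filter (fun i => i < k ∧ x i < u i) := by
              simp [hik, hh]
            simp [h] at this
          have h2 : ¬ u i < x i := fun hh => absurd (hk_min i hh) (not_le.2 hik)
          exact le_antisymm (not_lt.1 h1) (not_lt.1 h2)
        have hkn1 : (k : ℕ) + 1 ≤ n := k.isLt
        have hPeq : Pp n x (k : ℕ) = Pp n u (k : ℕ) := by
          unfold Pp
          apply Finset.sum_congr rfl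
          intro i hi
          simp only [Finset.mem_filter] at hi
          exact (heq i (Fin.lt_def.2 hi.2)).symm
        have h1 := hmaj ((k : ℕ) + 1) hkn1
        rw [Pp_succ n x (k : ℕ) k.isLt, Pp_succ n u (k : ℕ) k.isLt] at h1
        simp only [Fin.eta] at h1
        rw [hPeq] at h1
        linarith [hk_mem]
      set j := (Finset.univ.filter (fun i => i < k ∧ x i < u i)).max' hJ with hjdef
      have hj_mem : j < k ∧ x j < u j := by
        have h := Finset.max'_mem _ hJ
        rw [Finset.mem_filter] at h
        exact h.2
      obtain ⟨hjk, hxuj⟩ := hj_mem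
      have hj_max : ∀ i, i < k → x i < u i → i ≤ j := by
        intro i h1 h2
        exact Finset.le_max' _ i (by simp [h1, h2])
      have hbetween : ∀ i, j < i → i < k → u i = x i := by
        intro i h1 h2
        have hx1 : ¬ x i < u i := fun hh => absurd (hj_max i h2 hh) (not_le.2 h1)
        have hx2 : ¬ u i < x i := fun hh => absurd (hk_min i hh) (not_le.2 h2)
        exact le_antisymm (not_lt.1 hx1) (not_lt.1 hx2)
      have hxkj : x k ≤ x j := hx hjk.le
      have hukuj : u k < u j := lt_of_lt_of_le hk_mem (le_of_lt (lt_of_le_of_lt hxkj hxuj))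
      have hjne : j ≠ k := ne_of_lt hjk
      set δ := min (u j - x j) (x k - u k) with hδdef
      have hδpos : 0 < δ := lt_min (by linarith) (by linarith)
      have hδ1 : δ ≤ u j - x j := min_le_left _ _
      have hδ2 : δ ≤ x k - u k := min_le_right _ _
      set u' := fun i => if i = j then u j - δ else if i = k then u k + δ else u i with hu'def
      have h'j : u' j = u j - δ := by simp [hu'def]
      have h'k : u' k = u k + δ := by simp [hu'def, hjne.symm]
      have h'other : ∀ i, i ≠ j → i ≠ k → u' i = u i := by
        intro i h1 h2; simp [hu'def, h1, h2]
      have hxj_le : x j ≤ u' j := by rw [h'j]; linarith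
      have h'j_le : u' j ≤ u j := by rw [h'j]; linarith
      have h'k_le : u' k ≤ x k := by rw [h'k]; linarith
      have huk_le : u k ≤ u' k := by rw [h'k]; linarith
      -- u' is antitone
      have hu' : Antitone u' := by
        intro a b hab
        rcases eq_or_ne a j with rfl | haj
        · rcases eq_or_ne b j with rfl | hbj
          · exact le_refl _
          rcases eq_or_ne b k with rfl | hbk
          · calc u' k ≤ x k := h'k_le
              _ ≤ x j := hxkj
              _ ≤ u' j := hxj_le
          · have hjb : j < b := lt_of_le_of_ne hab (Ne.symm hbj)
            rcases lt_or_gt_of_ne hbk with hbk' | hbk'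
            · rw [h'other b hbj hbk, hbetween b hjb hbk']
              exact le_trans (hx hjb.le) hxj_le
            · rw [h'other b hbj hbk]
              calc u b ≤ u k := hu hbk'.le
                _ ≤ u' k := huk_le
                _ ≤ x k := h'k_le
                _ ≤ x j := hxkj
                _ ≤ u' j := hxj_le
        rcases eq_or_ne a k with rfl | hak
        · rcases eq_or_ne b j with rfl | hbj
          · exact absurd (lt_of_lt_of_le hjk hab) (lt_irrefl j)
          rcases eq_or_ne b k with rfl | hbk
          · exact le_refl _
          · have hkb : k < b := lt_of_le_of_ne hab (Ne.symm hbk)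
            rw [h'other b hbj hbk]
            exact le_trans (hu hkb.le) huk_le
        · rcases eq_or_ne b j with rfl | hbj
          · rw [h'other a haj hak]
            exact le_trans h'j_le (hu hab)
          rcases eq_or_ne b k with rfl | hbk
          · have hak' : a < k := lt_of_le_of_ne hab hak
            rcases lt_or_ge a j with haj' | haj'
            · rw [h'other a haj hak]
              calc u' k ≤ x k := h'k_le
                _ ≤ x j := hxkj
                _ ≤ u j := le_of_lt hxuj
                _ ≤ u a := hu haj'.le
            · have hja : j < a := lt_of_le_of_ne haj' (Ne.symm haj)
              rw [h'other a haj hak, hbetween a hja hak']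
              exact le_trans h'k_le (hx hak'.le)
          · rw [h'other a haj hak, h'other b hbj hbk]
            exact hu hab
      -- prefix sums of u'
      have hPu' : ∀ m : ℕ, Pp n u' m = Pp n u m
          + (if (k : ℕ) < m then δ else 0) - (if (j : ℕ) < m then δ else 0) := by
        intro m
        have hdiff : ∀ i : Fin n, u' i - u i
            = (if i = k then δ else 0) - (if i = j then δ else 0) := by
          intro i
          rcases eq_or_ne i j with rfl | h1
          · rw [h'j]; simp [hjne]
          rcases eq_or_ne i k with rfl | h2
          · rw [h'k]; simp [hjne.symm]
          · rw [h'other i h1 h2]; simp [h1, h2]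
        have hsub : Pp n u' m - Pp n u m
            = ∑ i ∈ Finset.univ.filter (fun i : Fin n => (i : ℕ) < m), (u' i - u i) := by
          rw [Finset.sum_sub_distrib]; rfl
        rw [Finset.sum_congr rfl (fun i _ => hdiff i)] at hsub
        rw [Finset.sum_sub_distrib, Finset.sum_ite_eq' _ k (fun _ => δ),
          Finset.sum_ite_eq' _ j (fun _ => δ)] at hsub
        simp only [Finset.mem_filter, Finset.mem_univ, true_and] at hsub
        linarith [hsub]
      -- prefix domination for u'
      have hmaj' : ∀ m, m ≤ n → Pp n x m ≤ Pp n u' m := by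
        intro m hm
        rcases le_or_gt m (j : ℕ) with h | h
        · rw [hPu' m, if_neg (by omega : ¬ (k : ℕ) < m), if_neg (by omega : ¬ (j : ℕ) < m)]
          have := hmaj m hm
          linarith
        rcases le_or_gt m (k : ℕ) with h2 | h2
        · rw [hPu' m, if_neg (by omega : ¬ (k : ℕ) < m), if_pos h]
          have key : Pp n u m - Pp n x m
              = ∑ i ∈ Finset.univ.filter (fun i : Fin n => (i : ℕ) < m), (u i - x i) := by
            rw [Finset.sum_sub_distrib]; rfl
          set s := Finset.univ.filter (fun i : Fin n => (i : ℕ) < m) with hsdef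
          have hsplit := Finset.sum_filter_add_sum_filter_not s
            (fun i : Fin n => (i : ℕ) < (j : ℕ) + 1) (fun i => u i - x i)
          have hzero : ∑ i ∈ s.filter (fun i : Fin n => ¬ (i : ℕ) < (j : ℕ) + 1),
              (u i - x i) = 0 := by
            apply Finset.sum_eq_zero
            intro i hi
            simp only [hsdef, Finset.mem_filter, Finset.mem_univ, true_and] at hi
            have hji : j < i := Fin.lt_def.2 (by omega)
            have hik : i < k := Fin.lt_def.2 (by omega)
            rw [hbetween i hji hik]; ring
          have hfirst : s.filter (fun i : Fin n => (i : ℕ) < (j : ℕ) + 1)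
              = Finset.univ.filter (fun i : Fin n => (i : ℕ) < (j : ℕ) + 1) := by
            ext i
            simp only [hsdef, Finset.filter_filter, Finset.mem_filter, Finset.mem_univ, true_and]
            omega
          have hjn : (j : ℕ) < n := j.isLt
          have hfval : ∑ i ∈ Finset.univ.filter (fun i : Fin n => (i : ℕ) < (j : ℕ) + 1),
              (u i - x i) = Pp n u ((j : ℕ) + 1) - Pp n x ((j : ℕ) + 1) := by
            rw [Pp, Pp, Finset.sum_sub_distrib]
          have hj1 := hmaj (j : ℕ) (le_of_lt hjn)
          have hPj : Pp n u ((j : ℕ) + 1) - Pp n x ((j : ℕ) + 1) ≥ δ := by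
            rw [Pp_succ n u (j : ℕ) hjn, Pp_succ n x (j : ℕ) hjn]
            simp only [Fin.eta]
            linarith
          have : Pp n u m - Pp n x m ≥ δ := by
            rw [key, ← hsplit, hzero, hfirst, hfval]
            linarith
          linarith
        · rw [hPu' m, if_pos h2, if_pos (by omega : (j : ℕ) < m)]
          have := hmaj m hm
          linarith
      -- total sum
      have hsum' : ∑ i, x i = ∑ i, u' i := by
        rw [← Pp_n n u', hPu' n, if_pos k.isLt, if_pos j.isLt, Pp_n n u]
        linarith [hsum]
      -- discrepancy decreases
      have hj_in : j ∈ Finset.univ.filter (fun i => u i ≠ x i) := by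
        simp; linarith
      have hk_in : k ∈ Finset.univ.filter (fun i => u i ≠ x i) := by
        simp; linarith
      have hcard' : (Finset.univ.filter (fun i => u' i ≠ x i)).card ≤ d := by
        rcases le_or_gt (u j - x j) (x k - u k) with hc | hc
        · have hδeq : δ = u j - x j := min_eq_left hc
          have hfix : u' j = x j := by rw [h'j, hδeq]; ring
          have hsubs : Finset.univ.filter (fun i => u' i ≠ x i)
              ⊆ (Finset.univ.filter (fun i => u i ≠ x i)).erase j := by
            intro i hi
            simp only [Finset.mem_filter, Finset.mem_univ, true_and] at hi
            rcases eq_or_ne i j with rfl | h1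
            · exact absurd hfix hi
            rcases eq_or_ne i k with rfl | h2
            · exact Finset.mem_erase.2 ⟨hjne.symm, by simp; linarith⟩
            · rw [h'other i h1 h2] at hi
              exact Finset.mem_erase.2 ⟨h1, by simp [hi]⟩
          have h1 := Finset.card_le_card hsubs
          rw [Finset.card_erase_of_mem hj_in] at h1
          omega
        · have hδeq : δ = x k - u k := min_eq_right (le_of_lt hc)
          have hfix : u' k = x k := by rw [h'k, hδeq]; ring
          have hsubs : Finset.univ.filter (fun i => u' i ≠ x i)
              ⊆ (Finset.univ.filter (fun i => u i ≠ x i)).erase k := by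
            intro i hi
            simp only [Finset.mem_filter, Finset.mem_univ, true_and] at hi
            rcases eq_or_ne i k with rfl | h2
            · exact absurd hfix hi
            rcases eq_or_ne i j with rfl | h1
            · exact Finset.mem_erase.2 ⟨hjne, by simp; linarith⟩
            · rw [h'other i h1 h2] at hi
              exact Finset.mem_erase.2 ⟨h2, by simp [hi]⟩
          have h1 := Finset.card_le_card hsubs
          rw [Finset.card_erase_of_mem hk_in] at h1
          omega
      -- induction hypothesis
      have hx_mem := ih u' x hu' hx hmaj' hsum' hcard'
      -- u' is a convex combination of u and a transposition of u
      set t := δ / (u j - u k) with htdef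
      have hujuk : (0:ℝ) < u j - u k := by linarith
      have ht0 : 0 < t := div_pos hδpos hujuk
      have ht1 : t ≤ 1 := by
        rw [div_le_one hujuk]
        linarith
      have htδ : t * (u j - u k) = δ := div_mul_cancel₀ δ (ne_of_gt hujuk)
      have hcombo : u' = (1 - t) • u + t • (u ∘ (Equiv.swap j k)) := by
        funext i
        simp only [Pi.add_apply, Pi.smul_apply, smul_eq_mul, Function.comp_apply]
        rcases eq_or_ne i j with rfl | h1
        · rw [h'j, Equiv.swap_apply_left]
          nlinarith [htδ]
        rcases eq_or_ne i k with rfl | h2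
        · rw [h'k, Equiv.swap_apply_right]
          nlinarith [htδ]
        · rw [h'other i h1 h2, Equiv.swap_apply_of_ne_of_ne h1 h2]
          ring
      have hsubset : {w : Fin n → ℝ | ∃ σ : Equiv.Perm (Fin n), w = u' ∘ σ}
          ⊆ convexHull ℝ {w : Fin n → ℝ | ∃ σ : Equiv.Perm (Fin n), w = u ∘ σ} := by
        rintro w ⟨σ, rfl⟩
        have hmem1 : (u ∘ σ) ∈ convexHull ℝ {w : Fin n → ℝ | ∃ σ : Equiv.Perm (Fin n), w = u ∘ σ} :=
          subset_convexHull ℝ _ ⟨σ, rfl⟩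
        have hmem2 : (u ∘ (Equiv.swap j k) ∘ σ)
            ∈ convexHull ℝ {w : Fin n → ℝ | ∃ σ : Equiv.Perm (Fin n), w = u ∘ σ} := by
          apply subset_convexHull ℝ _
          exact ⟨σ.trans (Equiv.swap j k), by funext i; simp [Function.comp]⟩
        have heq : u' ∘ σ = (1 - t) • (u ∘ σ) + t • (u ∘ (Equiv.swap j k) ∘ σ) := by
          rw [hcombo]
          funext i
          simp [Function.comp]
        rw [heq]
        exact (convex_convexHull ℝ _) hmem1 hmem2 (by linarith) (le_of_lt ht0) (by ring)
      exact convexHull_min hsubset (convex_convexHull ℝ _) hx_mem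


lemma comp_perm_mem_convexHull_perms {n : ℕ} {u : Fin n → ℝ} {x : Fin n → ℝ}
    (hx : x ∈ convexHull ℝ {w : Fin n → ℝ | ∃ σ : Equiv.Perm (Fin n), w = u ∘ σ})
    (τ : Equiv.Perm (Fin n)) :
    x ∘ τ ∈ convexHull ℝ {w : Fin n → ℝ | ∃ σ : Equiv.Perm (Fin n), w = u ∘ σ} := by
  set L : (Fin n → ℝ) →ₗ[ℝ] (Fin n → ℝ) := LinearMap.funLeft ℝ ℝ τ with hL
  have hLx : L x = x ∘ τ := rfl
  have himg : L '' {w : Fin n → ℝ | ∃ σ : Equiv.Perm (Fin n), w = u ∘ σ}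
      ⊆ {w : Fin n → ℝ | ∃ σ : Equiv.Perm (Fin n), w = u ∘ σ} := by
    rintro _ ⟨w, ⟨σ, rfl⟩, rfl⟩
    exact ⟨τ.trans σ, by funext i; rfl⟩
  have h1 : L x ∈ L '' (convexHull ℝ {w : Fin n → ℝ | ∃ σ : Equiv.Perm (Fin n), w = u ∘ σ}) :=
    Set.mem_image_of_mem _ hx
  rw [L.image_convexHull] at h1
  rw [← hLx]
  exact convexHull_mono himg h1

lemma hlp {n : ℕ} (u x : Fin n → ℝ) (h : Majorizes n u x) :
    x ∈ convexHull ℝ {w : Fin n → ℝ | ∃ σ : Equiv.Perm (Fin n), w = u ∘ σ} := by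
  set us := sortedDesc n u with hus
  set xs := sortedDesc n x with hxs
  have hsum : ∑ i, xs i = ∑ i, us i := by
    rw [hus, hxs, sum_sortedDesc, sum_sortedDesc, h.2]
  have hmaj : ∀ k, k ≤ n → Pp n xs k ≤ Pp n us k := by
    intro k hk
    rcases lt_or_eq_of_le hk with hk' | rfl
    · exact h.1 k hk'
    · rw [Pp_n, Pp_n, hsum]
  have hxmem := hlp_aux n n us xs (sortedDesc_antitone n u) (sortedDesc_antitone n x)
    hmaj hsum (by
      calc (Finset.univ.filter (fun i => us i ≠ xs i)).card
          ≤ (Finset.univ : Finset (Fin n)).card := Finset.card_le_card (Finset.filter_subset _ _)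
        _ = n := by simp)
  -- perms of us are perms of u
  have hsubset : {w : Fin n → ℝ | ∃ σ : Equiv.Perm (Fin n), w = us ∘ σ}
      ⊆ {w : Fin n → ℝ | ∃ σ : Equiv.Perm (Fin n), w = u ∘ σ} := by
    rintro w ⟨σ, rfl⟩
    refine ⟨σ.trans (Fin.revPerm.trans (Tuple.sort u)), ?_⟩
    rw [hus, sortedDesc_eq_comp]
    funext i; rfl
  have hxsmem : xs ∈ convexHull ℝ {w : Fin n → ℝ | ∃ σ : Equiv.Perm (Fin n), w = u ∘ σ} :=
    convexHull_mono hsubset hxmem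
  -- x is xs composed with a permutation
  have hxeq : x = xs ∘ (Fin.revPerm.trans (Tuple.sort x)).symm := by
    rw [hxs, sortedDesc_eq_comp]
    funext i
    simp
  rw [hxeq]
  exact comp_perm_mem_convexHull_perms hxsmem _

theorem convexHull_permutation_invariant (n p : ℕ)
    (S : Set ((Fin n → ℝ) × (Fin p → ℝ)))
    (hS : ∀ x z, (x, z) ∈ S → ∀ σ : Equiv.Perm (Fin n), (x ∘ σ, z) ∈ S) :
    convexHull ℝ S =
      {q : (Fin n → ℝ) × (Fin p → ℝ) | ∃ u : Fin n → ℝ,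
        (u, q.2) ∈ convexHull ℝ (S ∩ {r | Antitone r.1}) ∧ Majorizes n u q.1} := by
  apply Set.Subset.antisymm
  · -- forward direction
    intro q hq
    rw [_root_.convexHull_eq] at hq
    obtain ⟨ι, t, w, f, hw0, hw1, hfS, hcm⟩ := hq
    have hq_eq : ∑ i ∈ t, w i • f i = q := by
      rw [← Finset.centerMass_eq_of_sum_1 _ _ hw1]; exact hcm
    set g : ι → ((Fin n → ℝ) × (Fin p → ℝ)) :=
      fun i => (sortedDesc n (f i).1, (f i).2) with hg
    have hgS0 : ∀ i ∈ t, g i ∈ S ∩ {r | Antitone r.1} := by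
      intro i hi
      constructor
      · have h1 : ((f i).1, (f i).2) ∈ S := by
          rw [Prod.mk.eta]; exact hfS i hi
        have h2 := hS (f i).1 (f i).2 h1 (Fin.revPerm.trans (Tuple.sort (f i).1))
        rw [hg]
        simp only
        rw [sortedDesc_eq_comp]
        exact h2
      · exact sortedDesc_antitone n (f i).1
    set u : Fin n → ℝ := ∑ i ∈ t, w i • sortedDesc n (f i).1 with hu
    refine ⟨u, ?_, ?_, ?_⟩
    · -- (u, q.2) ∈ convexHull of S₀
      have hmem : t.centerMass w g ∈ convexHull ℝ (S ∩ {r | Antitone r.1}) :=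
        Finset.centerMass_mem_convexHull t hw0 (hw1 ▸ one_pos) hgS0
      have : t.centerMass w g = (u, q.2) := by
        rw [Finset.centerMass_eq_of_sum_1 _ _ hw1]
        have hfst : (∑ i ∈ t, w i • g i).1 = u := by
          rw [Prod.fst_sum, hu]
          exact Finset.sum_congr rfl (fun i _ => rfl)
        have hsnd : (∑ i ∈ t, w i • g i).2 = q.2 := by
          rw [Prod.snd_sum, ← hq_eq, Prod.snd_sum]
          exact Finset.sum_congr rfl (fun i _ => rfl)
        exact Prod.ext hfst hsnd
      rwa [this] at hmem
    · -- topSum inequalities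
      intro k hk
      have hx_pt : ∀ a, q.1 a = ∑ i ∈ t, w i * (f i).1 a := by
        intro a
        rw [← hq_eq, Prod.fst_sum, Finset.sum_apply]
        apply Finset.sum_congr rfl
        intro i _
        rfl
      have hu_pt : ∀ a, u a = ∑ i ∈ t, w i * sortedDesc n (f i).1 a := by
        intro a
        rw [hu, Finset.sum_apply]
        apply Finset.sum_congr rfl
        intro i _
        rfl
      have hu_anti : Antitone u := by
        intro a b hab
        rw [hu_pt a, hu_pt b]
        apply Finset.sum_le_sum
        intro i hi
        exact mul_le_mul_of_nonneg_left (sortedDesc_antitone n (f i).1 hab) (hw0 i hi)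
      obtain ⟨A, hAcard, hAeq⟩ := topSum_eq_subset_sum q.1 (le_of_lt hk)
      have step1 : topSum n q.1 k = ∑ i ∈ t, w i * (∑ a ∈ A, (f i).1 a) := by
        rw [hAeq]
        rw [Finset.sum_congr rfl (fun a _ => hx_pt a)]
        rw [Finset.sum_comm]
        apply Finset.sum_congr rfl
        intro i _
        rw [Finset.mul_sum]
      have step2 : ∑ i ∈ t, w i * (∑ a ∈ A, (f i).1 a)
          ≤ ∑ i ∈ t, w i * topSum n (f i).1 k := by
        apply Finset.sum_le_sum
        intro i hi
        apply mul_le_mul_of_nonneg_left _ (hw0 i hi)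
        have := subset_sum_le_topSum (f i).1 A
        rwa [hAcard] at this
      have step3 : ∑ i ∈ t, w i * topSum n (f i).1 k = Pp n u k := by
        rw [Pp]
        rw [Finset.sum_congr rfl (fun a _ => hu_pt a)]
        rw [Finset.sum_comm]
        apply Finset.sum_congr rfl
        intro i _
        rw [topSum_eq_Pp, Pp, Finset.mul_sum]
      have step4 : topSum n u k = Pp n u k := by
        rw [topSum_eq_Pp, sortedDesc_of_antitone hu_anti]
      rw [step4]
      calc topSum n q.1 k = ∑ i ∈ t, w i * (∑ a ∈ A, (f i).1 a) := step1
        _ ≤ ∑ i ∈ t, w i * topSum n (f i).1 k := step2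
        _ = Pp n u k := step3
    · -- total sums equal
      have hx_pt : ∀ a, q.1 a = ∑ i ∈ t, w i * (f i).1 a := by
        intro a
        rw [← hq_eq, Prod.fst_sum, Finset.sum_apply]
        exact Finset.sum_congr rfl (fun i _ => rfl)
      have hu_pt : ∀ a, u a = ∑ i ∈ t, w i * sortedDesc n (f i).1 a := by
        intro a
        rw [hu, Finset.sum_apply]
        exact Finset.sum_congr rfl (fun i _ => rfl)
      rw [Finset.sum_congr rfl (fun a _ => hx_pt a),
        Finset.sum_congr rfl (fun a _ => hu_pt a), Finset.sum_comm]
      rw [Finset.sum_comm (s := Finset.univ)]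
      apply Finset.sum_congr rfl
      intro i _
      rw [← Finset.mul_sum, ← Finset.mul_sum, sum_sortedDesc]
  · -- reverse direction
    rintro ⟨x, z⟩ ⟨u, huconv, humaj⟩
    simp only at huconv humaj
    have h1 : (u, z) ∈ convexHull ℝ S := convexHull_mono Set.inter_subset_left huconv
    -- convexHull S is permutation invariant
    have hperm : ∀ σ : Equiv.Perm (Fin n), ((u ∘ σ : Fin n → ℝ), z) ∈ convexHull ℝ S := by
      intro σ
      set L : ((Fin n → ℝ) × (Fin p → ℝ)) →ₗ[ℝ] ((Fin n → ℝ) × (Fin p → ℝ)) :=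
        (LinearMap.funLeft ℝ ℝ σ).prodMap LinearMap.id with hLdef
      have hL : ∀ r : (Fin n → ℝ) × (Fin p → ℝ), L r = (r.1 ∘ σ, r.2) := fun r => rfl
      have himg : L '' S ⊆ S := by
        rintro _ ⟨r, hr, rfl⟩
        rw [hL]
        exact hS r.1 r.2 (by rwa [Prod.mk.eta]) σ
      have h2 : L (u, z) ∈ L '' (convexHull ℝ S) := Set.mem_image_of_mem _ h1
      rw [L.image_convexHull] at h2
      have h3 := convexHull_mono himg h2
      rwa [hL] at h3
    -- HLP: x is in the convex hull of permutations of u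
    have hx : x ∈ convexHull ℝ {w : Fin n → ℝ | ∃ σ : Equiv.Perm (Fin n), w = u ∘ σ} :=
      hlp u x humaj
    -- affine map v ↦ (v, z)
    set g : (Fin n → ℝ) →ᵃ[ℝ] ((Fin n → ℝ) × (Fin p → ℝ)) :=
      { toFun := fun v => (v, z),
        linear := LinearMap.prod LinearMap.id 0,
        map_vadd' := fun p0 v => by
          ext <;> simp [Prod.ext_iff] } with hgdef
    have hgval : ∀ v, g v = (v, z) := fun v => rfl
    have h4 : g x ∈ g '' (convexHull ℝ {w : Fin n → ℝ | ∃ σ : Equiv.Perm (Fin n), w = u ∘ σ}) :=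
      Set.mem_image_of_mem _ hx
    rw [AffineMap.image_convexHull] at h4
    have h5 : g '' {w : Fin n → ℝ | ∃ σ : Equiv.Perm (Fin n), w = u ∘ σ} ⊆ convexHull ℝ S := by
      rintro _ ⟨w0, ⟨σ, rfl⟩, rfl⟩
      rw [hgval]
      exact hperm σ
    have h6 := convexHull_min h5 (convex_convexHull ℝ S) h4
    rwa [hgval] at h6

end
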